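/- Let n ≥ 1, m = m₁ + m₂ with m₁, m₂ ≥ 1, and 0 ≤ t < T. Let A ∈ L¹(t,T;ℝ^{n×n}), B = (B₁, B₂) ∈ L²(t,T;ℝ^{n×m}) with blocks B₁, B₂ of column sizes m₁, m₂, C ∈ L²(t,T;ℝ^{n×n}), D = (D₁, D₂) ∈ L^∞(t,T;ℝ^{n×m}), Q ∈ L¹(t,T;𝕊ⁿ), S ∈ L²(t,T;ℝ^{m×n}), R ∈ L^∞(t,T;𝕊ᵐ) with block decomposition R = [[R₁₁, R₁₂],[R₂₁, R₂₂]], and G ∈ 𝕊ⁿ. Call a continuous P : [t,T] → 𝕊ⁿ a regular solution of the Riccati equation if, with M(s) = B(s)ᵀP(s) + D(s)ᵀP(s)C(s) + S(s), R̂(s) = R(s) + D(s)ᵀP(s)D(s), and R̂(s)† the Moore–Penrose pseudoinverse of R̂(s), one has: P(s) = G + ∫ₛᵀ [PA + AᵀP + CᵀPC + Q − MᵀR̂†M] dr for all s ∈ [t,T]; R̂R̂†M = M a.e. on [t,T]; R̂†M ∈ L²(t,T;ℝ^{m×n}); and, a.e. on [t,T], R₁₁ + D₁ᵀPD₁ is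 positive semidefinite and R₂₂ + D₂ᵀPD₂ is negative semidefinite. Then the Riccati equation admits at most one regular solution: if P and P̄ are both regular solutions, then P(s) = P̄(s) for all s ∈ [t,T]. -/

import Mathlib

open Matrix MeasureTheory

attribute [local instance] Matrix.normedAddCommGroup Matrix.normedSpace

/-- `P` is a *regular solution* of the game Riccati equation on `[t,T]`: `P` is continuous
with symmetric values and there is a pointwise Moore–Penrose pseudoinverse `R̂†` of
`R̂ = R + DᵀPD` (four Penrose equations a.e.) such that `P` solves the Riccati integral
equation, the range condition `R̂R̂†M = M` holds a.e. (where `M = BᵀP + DᵀPC + S`),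
`R̂†M ∈ L²(t,T;ℝ^{m×n})`, and a.e. the block `R₁₁ + D₁ᵀPD₁` is positive semidefinite while
`R₂₂ + D₂ᵀPD₂` is negative semidefinite. The control index set is `Fin m₁ ⊕ Fin m₂`,
`Sum.inl`/`Sum.inr` giving the blocks of the two players. -/
def IsRegularGameRiccatiSolution {n m₁ m₂ : ℕ} (t T : ℝ)
    (A : ℝ → Matrix (Fin n) (Fin n) ℝ)
    (B : ℝ → Matrix (Fin n) (Fin m₁ ⊕ Fin m₂) ℝ)
    (C : ℝ → Matrix (Fin n) (Fin n) ℝ)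
    (D : ℝ → Matrix (Fin n) (Fin m₁ ⊕ Fin m₂) ℝ)
    (Q : ℝ → Matrix (Fin n) (Fin n) ℝ)
    (S : ℝ → Matrix (Fin m₁ ⊕ Fin m₂) (Fin n) ℝ)
    (R : ℝ → Matrix (Fin m₁ ⊕ Fin m₂) (Fin m₁ ⊕ Fin m₂) ℝ)
    (G : Matrix (Fin n) (Fin n) ℝ)
    (P : ℝ → Matrix (Fin n) (Fin n) ℝ) : Prop :=
  ContinuousOn P (Set.Icc t T) ∧
  (∀ s ∈ Set.Icc t T, (P s)ᵀ = P s) ∧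
  ∃ Rdag : ℝ → Matrix (Fin m₁ ⊕ Fin m₂) (Fin m₁ ⊕ Fin m₂) ℝ,
    -- four Penrose equations for R̂ = R + DᵀPD, a.e.
    (∀ᵐ s ∂volume.restrict (Set.Icc t T),
      (R s + (D s)ᵀ * P s * D s) * Rdag s * (R s + (D s)ᵀ * P s * D s)
          = R s + (D s)ᵀ * P s * D s ∧
        Rdag s * (R s + (D s)ᵀ * P s * D s) * Rdag s = Rdag s ∧
        ((R s + (D s)ᵀ * P s * D s) * Rdag s)ᵀ = (R s + (D s)ᵀ * P s * D s) * Rdag s ∧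
        (Rdag s * (R s + (D s)ᵀ * P s * D s))ᵀ = Rdag s * (R s + (D s)ᵀ * P s * D s)) ∧
    -- the Riccati integral equation
    (∀ s ∈ Set.Icc t T,
      P s = G + ∫ r in s..T,
        (P r * A r + (A r)ᵀ * P r + (C r)ᵀ * P r * C r + Q r
          - ((B r)ᵀ * P r + (D r)ᵀ * P r * C r + S r)ᵀ * Rdag r
              * ((B r)ᵀ * P r + (D r)ᵀ * P r * C r + S r))) ∧
    -- the range condition R̂R̂†M = M a.e.
    (∀ᵐ s ∂volume.restrict (Set.Icc t T),
      (R s + (D s)ᵀ * P s * D s) * Rdag s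
          * ((B s)ᵀ * P s + (D s)ᵀ * P s * C s + S s)
        = (B s)ᵀ * P s + (D s)ᵀ * P s * C s + S s) ∧
    -- R̂†M ∈ L²(t,T;ℝ^{m×n})
    (AEStronglyMeasurable
        (fun s => Rdag s * ((B s)ᵀ * P s + (D s)ᵀ * P s * C s + S s))
        (volume.restrict (Set.Icc t T)) ∧
      IntegrableOn
        (fun s => ‖Rdag s * ((B s)ᵀ * P s + (D s)ᵀ * P s * C s + S s)‖ ^ 2)
        (Set.Icc t T)) ∧
    -- definiteness of the diagonal blocks, a.e.
    (∀ᵐ s ∂volume.restrict (Set.Icc t T),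
      ((R s + (D s)ᵀ * P s * D s).submatrix Sum.inl Sum.inl).PosSemidef ∧
        (-(R s + (D s)ᵀ * P s * D s).submatrix Sum.inr Sum.inr).PosSemidef)

/-!
Let `Θ = R̂†M` and `Θ̄` be the gains of two regular solutions `P`, `P̄`. The range condition
`R̂Θ = M` and the symmetry of `R̂` make the nonlinear terms of the two Riccati integrands combine
into the closed-loop identity, with `Δ = P - P̄`,
`F(P) - F(P̄) = Δ(A - BΘ̄) + (A - BΘ)ᵀΔ + (C - DΘ)ᵀΔ(C - DΘ̄)`.
Since `Θ, Θ̄ ∈ L²`, this is a linear equation for `Δ` with integrable coefficients, and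
Grönwall's inequality in integral form forces `Δ = 0`.
-/

open Set Filter Topology ENNReal

namespace Matrix

-- The local sup-norm instance carries the metric topology, which instance search does not
-- identify with `instTopologicalSpaceMatrix`; this bridge makes `MemLp`/`Integrable` available.
instance eNormedAddMonoidReal {m n : Type*} [Fintype m] [Fintype n] :
    ENormedAddMonoid (Matrix m n ℝ) :=
  NormedAddGroup.toENormedAddMonoid

variable {l m n α : Type*} [Fintype l] [Fintype m] [Fintype n]

theorem norm_mul_le_card_mul [NonUnitalNormedRing α] (A : Matrix l m α) (B : Matrix m n α) :
    ‖A * B‖ ≤ Fintype.card m * ‖A‖ * ‖B‖ := by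
  rw [norm_le_iff (by positivity)]
  intro i j
  calc ‖(A * B) i j‖ ≤ ∑ k, ‖A i k * B k j‖ := by rw [mul_apply]; exact norm_sum_le _ _
    _ ≤ ∑ _k : m, ‖A‖ * ‖B‖ := by
        gcongr with k
        exact (norm_mul_le _ _).trans (mul_le_mul (norm_entry_le_entrywise_sup_norm A)
          (norm_entry_le_entrywise_sup_norm B) (norm_nonneg _) (norm_nonneg _))
    _ = Fintype.card m * ‖A‖ * ‖B‖ := by simp [mul_assoc]

theorem nnnorm_mul_le_card_mul [NonUnitalNormedRing α] (A : Matrix l m α) (B : Matrix m n α) :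
    ‖A * B‖₊ ≤ Fintype.card m * ‖A‖₊ * ‖B‖₊ := by
  simpa [← NNReal.coe_le_coe] using norm_mul_le_card_mul A B

theorem norm_lyapunov_le [NonUnitalNormedRing α] (Δ X₁ X₂ Y₁ Y₂ : Matrix n n α) :
    ‖Δ * X₁ + X₂ᵀ * Δ + Y₁ᵀ * Δ * Y₂‖
      ≤ (Fintype.card n * (‖X₁‖ + ‖X₂‖) + Fintype.card n ^ 2 * (‖Y₁‖ * ‖Y₂‖)) * ‖Δ‖ := by
  have h₁ := norm_mul_le_card_mul Δ X₁
  have h₂ := norm_mul_le_card_mul X₂ᵀ Δ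
  have h₃ := norm_mul_le_card_mul (Y₁ᵀ * Δ) Y₂
  have h₄ := norm_mul_le_card_mul Y₁ᵀ Δ
  rw [norm_transpose] at h₂ h₄
  calc _ ≤ ‖Δ * X₁‖ + ‖X₂ᵀ * Δ‖ + ‖Y₁ᵀ * Δ * Y₂‖ := norm_add₃_le
    _ ≤ _ := by
      have : ‖Y₁ᵀ * Δ‖ * ‖Y₂‖ ≤ Fintype.card n * ‖Y₁‖ * ‖Δ‖ * ‖Y₂‖ := by gcongr
      nlinarith [norm_nonneg Y₂, norm_nonneg Δ]

theorem riccati_sub_eq_lyapunov [CommRing α] (A C Q P P' : Matrix n n α)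
    (B D : Matrix n m α) (S : Matrix m n α) (R : Matrix m m α) (Θ Θ' : Matrix m n α)
    (hP : Pᵀ = P) (hP' : P'ᵀ = P') (hR : Rᵀ = R)
    (hΘ : (R + Dᵀ * P * D) * Θ = Bᵀ * P + Dᵀ * P * C + S)
    (hΘ' : (R + Dᵀ * P' * D) * Θ' = Bᵀ * P' + Dᵀ * P' * C + S) :
    (P * A + Aᵀ * P + Cᵀ * P * C + Q - (Bᵀ * P + Dᵀ * P * C + S)ᵀ * Θ)
        - (P' * A + Aᵀ * P' + Cᵀ * P' * C + Q - (Bᵀ * P' + Dᵀ * P' * C + S)ᵀ * Θ')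
      = (P - P') * (A - B * Θ') + (A - B * Θ)ᵀ * (P - P')
        + (C - D * Θ)ᵀ * (P - P') * (C - D * Θ') := by
  set M := Bᵀ * P + Dᵀ * P * C + S
  set M' := Bᵀ * P' + Dᵀ * P' * C + S
  have hMM' : M = M' + Bᵀ * (P - P') + Dᵀ * (P - P') * C := by
    simp only [M, M', Matrix.mul_sub, Matrix.sub_mul]; abel
  have h₁ : Mᵀ * Θ = Θᵀ * M := by
    rw [← hΘ, Matrix.transpose_mul, Matrix.mul_assoc]
    simp [Matrix.transpose_add, Matrix.transpose_mul, hR, hP, Matrix.mul_assoc]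
  have h₂ : Θᵀ * M' = Mᵀ * Θ' - Θᵀ * Dᵀ * (P - P') * D * Θ' := by
    rw [← hΘ, ← hΘ']
    simp only [transpose_mul, transpose_add, hR, hP, transpose_transpose, Matrix.mul_add,
      Matrix.add_mul, Matrix.mul_sub, Matrix.sub_mul, Matrix.mul_assoc]
    abel
  rw [h₁, hMM', Matrix.mul_add, Matrix.mul_add, h₂, hMM']
  simp only [transpose_mul, transpose_add, transpose_sub, hP, hP', transpose_transpose,
    Matrix.add_mul, Matrix.mul_sub, Matrix.sub_mul, Matrix.mul_assoc]
  abel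

end Matrix

namespace MeasureTheory

variable {α l m n : Type*} [MeasurableSpace α] {μ : Measure α} [Fintype m] {p q r : ℝ≥0∞}

theorem AEStronglyMeasurable.matrix_mul {f : α → Matrix l m ℝ} {g : α → Matrix m n ℝ}
    (hf : AEStronglyMeasurable f μ) (hg : AEStronglyMeasurable g μ) :
    AEStronglyMeasurable (fun x => f x * g x) μ :=
  (continuous_fst.matrix_mul continuous_snd).comp_aestronglyMeasurable (hf.prodMk hg)

variable [Fintype l] [Fintype n]

theorem MemLp.matrix_mul [HolderTriple p q r] {f : α → Matrix l m ℝ} {g : α → Matrix m n ℝ}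
    (hf : MemLp f p μ) (hg : MemLp g q μ) : MemLp (fun x => f x * g x) r μ :=
  hf.of_bilin (· * ·) (Fintype.card m) hg (hf.1.matrix_mul hg.1)
    (ae_of_all _ fun x => Matrix.nnnorm_mul_le_card_mul (f x) (g x))

theorem MemLp.matrix_transpose {f : α → Matrix m n ℝ} (hf : MemLp f p μ) :
    MemLp (fun x => (f x)ᵀ) p μ :=
  hf.of_le ((continuous_id.matrix_transpose).comp_aestronglyMeasurable hf.1)
    (ae_of_all _ fun x => (Matrix.norm_transpose (f x)).le)

end MeasureTheory

theorem ContinuousOn.memLp_top_restrict {X E : Type*} [TopologicalSpace X]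
    [MeasurableSpace X] [OpensMeasurableSpace X] [T2Space X] [NormedAddCommGroup E]
    [SecondCountableTopologyEither X E] {μ : Measure X} {f : X → E} {K : Set X}
    (hf : ContinuousOn f K) (hK : IsCompact K) : MemLp f ∞ (μ.restrict K) :=
  have ⟨C, hC⟩ := hK.exists_bound_of_continuousOn hf
  memLp_top_of_bound (hf.aestronglyMeasurable hK.measurableSet) C
    (ae_restrict_of_forall_mem hK.measurableSet hC)

section Gronwall

variable {u φ : ℝ → ℝ}

theorem eqOn_zero_of_le_setIntegral_Ioc_of_integral_lt_one {a b : ℝ}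
    (hu : ContinuousOn u (Icc a b)) (hu₀ : ∀ s ∈ Icc a b, 0 ≤ u s) (hφ₀ : 0 ≤ φ)
    (hφ : IntegrableOn φ (Icc a b)) (hsmall : ∫ r in Ioc a b, φ r < 1)
    (hle : ∀ s ∈ Icc a b, u s ≤ ∫ r in Ioc s b, φ r * u r) :
    EqOn u 0 (Icc a b) := by
  intro s hs
  obtain ⟨x₀, hx₀, hmax⟩ := isCompact_Icc.exists_isMaxOn (nonempty_of_mem hs) hu
  have hIoc : ∀ s ∈ Icc a b, Ioc s b ⊆ Icc a b := fun s hs =>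
    Ioc_subset_Icc_self.trans (Icc_subset_Icc_left hs.1)
  have hbound : ∀ s ∈ Icc a b, u s ≤ (∫ r in Ioc a b, φ r) * u x₀ := fun s hs =>
    calc u s ≤ ∫ r in Ioc s b, φ r * u r := hle s hs
      _ ≤ ∫ r in Ioc s b, φ r * u x₀ :=
        setIntegral_mono_on ((hφ.mul_continuousOn hu isCompact_Icc).mono_set (hIoc s hs))
          ((hφ.mono_set (hIoc s hs)).mul_const _) measurableSet_Ioc
          fun r hr => mul_le_mul_of_nonneg_left (hmax (hIoc s hs hr)) (hφ₀ r)
      _ = (∫ r in Ioc s b, φ r) * u x₀ := integral_mul_const _ _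
      _ ≤ (∫ r in Ioc a b, φ r) * u x₀ :=
        mul_le_mul_of_nonneg_right (setIntegral_mono_set (hφ.mono_set Ioc_subset_Icc_self)
          (ae_of_all _ hφ₀) (Ioc_subset_Ioc_left hs.1).eventuallyLE) (hu₀ x₀ hx₀)
  have hx₀ : u x₀ = 0 := by nlinarith [hbound x₀ hx₀, hu₀ x₀ hx₀]
  have := hbound s hs
  rw [hx₀, mul_zero] at this
  exact le_antisymm this (hu₀ s hs)

theorem eqOn_zero_of_le_setIntegral_Ioc {t T : ℝ}
    (hu : ContinuousOn u (Icc t T)) (hu₀ : ∀ s ∈ Icc t T, 0 ≤ u s) (hφ₀ : 0 ≤ φ)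
    (hφ : IntegrableOn φ (Icc t T)) (hle : ∀ s ∈ Icc t T, u s ≤ ∫ r in Ioc s T, φ r * u r) :
    EqOn u 0 (Icc t T) := by
  intro s hs
  set Z := {x | ∀ r ∈ Ioc x T, u r = 0}
  have hZ_closed : IsClosed Z := by
    have : Z = ⋂ r ∈ {r | r ≤ T ∧ u r ≠ 0}, Ici r := by
      ext x
      simp only [Z, mem_ofPred_eq, mem_iInter, mem_Ici, mem_Ioc]
      grind
    rw [this]
    exact isClosed_biInter fun r _ => isClosed_Ici
  have hZ_zero : ∀ x ∈ Icc t T, x ∈ Z → u x = 0 := fun x hx hxZ => by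
    have := hle x hx
    rw [setIntegral_congr_fun measurableSet_Ioc (g := 0) fun r hr => by simp [hxZ r hr]] at this
    simp only [Pi.zero_apply, integral_zero] at this
    exact le_antisymm this (hu₀ x hx)
  -- continuous induction from `T` down to `t`: `u` vanishes on a left neighbourhood of any
  -- `x ∈ Z` on which the mass of `φ` is less than one
  have htZ : t ∈ Z := by
    refine (hZ_closed.inter isClosed_Icc).mem_of_ge_of_forall_exists_lt
      (fun r hr => absurd hr.2 hr.1.not_ge) (hs.1.trans hs.2) ?_
    rintro x ⟨hxZ, hx⟩
    have hφx : IntegrableOn φ (uIcc t x) :=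
      hφ.mono_set (uIcc_of_le hx.1.le ▸ Icc_subset_Icc_right hx.2)
    have htend : Tendsto (fun z => ∫ r in z..x, φ r) (𝓝[<] x) (𝓝 0) := by
      have := (intervalIntegral.continuousOn_primitive_interval_left hφx x right_mem_uIcc).tendsto
      rw [intervalIntegral.integral_same] at this
      exact this.mono_left (nhdsWithin_le_of_mem (uIcc_of_le hx.1.le ▸ Icc_mem_nhdsLT hx.1))
    obtain ⟨z, hsmall, hzt, hzx⟩ :=
      ((htend.eventually (gt_mem_nhds one_pos)).and (Ioo_mem_nhdsLT hx.1)).exists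
    have hsub : Icc z x ⊆ Icc t T := Icc_subset_Icc hzt.le hx.2
    have hzero := eqOn_zero_of_le_setIntegral_Ioc_of_integral_lt_one (hu.mono hsub)
      (fun s hs => hu₀ s (hsub hs)) hφ₀ (hφ.mono_set hsub)
      (by rwa [← intervalIntegral.integral_of_le hzx.le]) fun s hs => by
        rw [← setIntegral_eq_of_subset_of_forall_sdiff_eq_zero measurableSet_Ioc
          (Ioc_subset_Ioc_right hx.2) fun r hr => ?_]
        · exact hle s (hsub hs)
        · rw [hxZ r ⟨not_le.1 fun h => hr.2 ⟨hr.1.1, h⟩, hr.1.2⟩, mul_zero]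
    refine ⟨z, fun r hr => ?_, hzt.le, hzx⟩
    rcases le_or_gt r x with hrx | hrx
    · exact hzero ⟨hr.1.le, hrx⟩
    · exact hxZ r ⟨hrx, hr.2⟩
  exact hZ_zero s hs fun r hr => htZ r ⟨hs.1.trans_lt hr.1, hr.2⟩

end Gronwall

theorem eqOn_zero_of_eq_intervalIntegral_lyapunov {n : Type*} [Fintype n] {t T : ℝ}
    {Δ X₁ X₂ Y₁ Y₂ L : ℝ → Matrix n n ℝ} (hΔ : ContinuousOn Δ (Icc t T))
    (hX₁ : MemLp X₁ 1 (volume.restrict (Icc t T))) (hX₂ : MemLp X₂ 1 (volume.restrict (Icc t T)))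
    (hY₁ : MemLp Y₁ 2 (volume.restrict (Icc t T))) (hY₂ : MemLp Y₂ 2 (volume.restrict (Icc t T)))
    (hL : ∀ᵐ r ∂volume.restrict (Icc t T),
      L r = Δ r * X₁ r + (X₂ r)ᵀ * Δ r + (Y₁ r)ᵀ * Δ r * Y₂ r)
    (hΔL : ∀ s ∈ Icc t T, Δ s = ∫ r in s..T, L r) :
    EqOn Δ 0 (Icc t T) := by
  set φ : ℝ → ℝ := fun r =>
    Fintype.card n * (‖X₁ r‖ + ‖X₂ r‖) + Fintype.card n ^ 2 * (‖Y₁ r‖ * ‖Y₂ r‖)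
  have hφ₀ : 0 ≤ φ := fun r => by positivity
  have hφ : IntegrableOn φ (Icc t T) :=
    ((((memLp_one_iff_integrable.1 hX₁).norm.add (memLp_one_iff_integrable.1 hX₂).norm).const_mul
      _).add ((memLp_one_iff_integrable.1 (hY₂.norm.mul' hY₁.norm)).const_mul _))
  have hbound : ∀ᵐ r ∂volume.restrict (Icc t T), ‖L r‖ ≤ φ r * ‖Δ r‖ :=
    hL.mono fun r hr => hr ▸ Matrix.norm_lyapunov_le _ _ _ _ _
  have hφΔ : IntegrableOn (fun r => φ r * ‖Δ r‖) (Icc t T) :=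
    hφ.mul_continuousOn hΔ.norm isCompact_Icc
  refine fun s hs => norm_eq_zero.1 (eqOn_zero_of_le_setIntegral_Ioc hΔ.norm
    (fun _ _ => norm_nonneg _) hφ₀ hφ (fun s hs => ?_) hs)
  have hsub : Ioc s T ⊆ Icc t T := Ioc_subset_Icc_self.trans (Icc_subset_Icc_left hs.1)
  calc ‖Δ s‖ = ‖∫ r in s..T, L r‖ := by rw [← hΔL s hs]
    _ ≤ ∫ r in s..T, ‖L r‖ := intervalIntegral.norm_integral_le_integral_norm hs.2
    _ = ∫ r in Ioc s T, ‖L r‖ := intervalIntegral.integral_of_le hs.2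
    _ ≤ ∫ r in Ioc s T, φ r * ‖Δ r‖ :=
      integral_mono_of_nonneg (ae_of_all _ fun _ => norm_nonneg _) (hφΔ.mono_set hsub)
        (ae_restrict_of_ae_restrict_of_subset hsub hbound)

/-- The integrand of the Riccati equation, with `MᵀR̂†M` written `MᵀΘ` for the gain `Θ = R̂†M`. -/
def riccatiIntegrand {α n m : Type*} [Fintype n] [Fintype m] (A : α → Matrix n n ℝ)
    (B : α → Matrix n m ℝ) (C : α → Matrix n n ℝ) (D : α → Matrix n m ℝ) (Q : α → Matrix n n ℝ)
    (S : α → Matrix m n ℝ) (P : α → Matrix n n ℝ) (Θ : α → Matrix m n ℝ) (s : α) :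
    Matrix n n ℝ :=
  P s * A s + (A s)ᵀ * P s + (C s)ᵀ * P s * C s + Q s
    - ((B s)ᵀ * P s + (D s)ᵀ * P s * C s + S s)ᵀ * Θ s

theorem MeasureTheory.MemLp.integrable_riccatiIntegrand {α n m : Type*} [MeasurableSpace α]
    {μ : Measure α} [Fintype n] [Fintype m] {A C Q P : α → Matrix n n ℝ}
    {B D : α → Matrix n m ℝ} {S Θ : α → Matrix m n ℝ}
    (hA : MemLp A 1 μ) (hB : MemLp B 2 μ) (hC : MemLp C 2 μ) (hD : MemLp D ∞ μ)
    (hQ : MemLp Q 1 μ) (hS : MemLp S 2 μ) (hP : MemLp P ∞ μ) (hΘ : MemLp Θ 2 μ) :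
    Integrable (riccatiIntegrand A B C D Q S P Θ) μ := by
  have hDP : MemLp (fun s => (D s)ᵀ * P s) ∞ μ := hD.matrix_transpose.matrix_mul hP
  have hM : MemLp (fun s => (B s)ᵀ * P s + (D s)ᵀ * P s * C s + S s) 2 μ :=
    ((hB.matrix_transpose.matrix_mul hP : MemLp _ 2 μ).add
      (hDP.matrix_mul hC : MemLp _ 2 μ)).add hS
  have hCP : MemLp (fun s => (C s)ᵀ * P s) 2 μ := hC.matrix_transpose.matrix_mul hP
  rw [← memLp_one_iff_integrable]
  exact ((((hP.matrix_mul hA : MemLp _ 1 μ).add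
    (hA.matrix_transpose.matrix_mul hP : MemLp _ 1 μ)).add (hCP.matrix_mul hC : MemLp _ 1 μ)).add
    hQ).sub (hM.matrix_transpose.matrix_mul hΘ : MemLp _ 1 μ)

theorem IsRegularGameRiccatiSolution.exists_gain {n m₁ m₂ : ℕ} {t T : ℝ}
    {A C Q : ℝ → Matrix (Fin n) (Fin n) ℝ} {B D : ℝ → Matrix (Fin n) (Fin m₁ ⊕ Fin m₂) ℝ}
    {S : ℝ → Matrix (Fin m₁ ⊕ Fin m₂) (Fin n) ℝ}
    {R : ℝ → Matrix (Fin m₁ ⊕ Fin m₂) (Fin m₁ ⊕ Fin m₂) ℝ} {G : Matrix (Fin n) (Fin n) ℝ}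
    {P : ℝ → Matrix (Fin n) (Fin n) ℝ}
    (hP : IsRegularGameRiccatiSolution t T A B C D Q S R G P) :
    ∃ Θ : ℝ → Matrix (Fin m₁ ⊕ Fin m₂) (Fin n) ℝ, MemLp Θ 2 (volume.restrict (Icc t T)) ∧
      (∀ᵐ s ∂volume.restrict (Icc t T),
        (R s + (D s)ᵀ * P s * D s) * Θ s = (B s)ᵀ * P s + (D s)ᵀ * P s * C s + S s) ∧
      ∀ s ∈ Icc t T, P s = G + ∫ r in s..T, riccatiIntegrand A B C D Q S P Θ r := by
  obtain ⟨-, -, X, -, hEq, hRange, ⟨hmeas, hsq⟩, -⟩ := hP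
  refine ⟨_, (memLp_two_iff_integrable_sq_norm hmeas).2 hsq,
    hRange.mono fun s hs => by rwa [← Matrix.mul_assoc], fun s hs => ?_⟩
  rw [hEq s hs]
  simp only [riccatiIntegrand, Matrix.mul_assoc]

theorem regular_game_riccati_solution_unique_general
    {n m₁ m₂ : ℕ}
    (t T : ℝ)
    (A : ℝ → Matrix (Fin n) (Fin n) ℝ)
    (B : ℝ → Matrix (Fin n) (Fin m₁ ⊕ Fin m₂) ℝ)
    (C : ℝ → Matrix (Fin n) (Fin n) ℝ)
    (D : ℝ → Matrix (Fin n) (Fin m₁ ⊕ Fin m₂) ℝ)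
    (Q : ℝ → Matrix (Fin n) (Fin n) ℝ)
    (S : ℝ → Matrix (Fin m₁ ⊕ Fin m₂) (Fin n) ℝ)
    (R : ℝ → Matrix (Fin m₁ ⊕ Fin m₂) (Fin m₁ ⊕ Fin m₂) ℝ)
    (G : Matrix (Fin n) (Fin n) ℝ)
    -- A ∈ L¹(t,T;ℝ^{n×n})
    (hAmeas : AEStronglyMeasurable A (volume.restrict (Set.Icc t T)))
    (hA : IntegrableOn (fun s => ‖A s‖) (Set.Icc t T))
    -- B ∈ L²(t,T;ℝ^{n×m})
    (hBmeas : AEStronglyMeasurable B (volume.restrict (Set.Icc t T)))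
    (hB : IntegrableOn (fun s => ‖B s‖ ^ 2) (Set.Icc t T))
    -- C ∈ L²(t,T;ℝ^{n×n})
    (hCmeas : AEStronglyMeasurable C (volume.restrict (Set.Icc t T)))
    (hC : IntegrableOn (fun s => ‖C s‖ ^ 2) (Set.Icc t T))
    -- D ∈ L^∞(t,T;ℝ^{n×m})
    (hDmeas : AEStronglyMeasurable D (volume.restrict (Set.Icc t T)))
    (hD : ∃ K : ℝ, ∀ᵐ s ∂volume.restrict (Set.Icc t T), ‖D s‖ ≤ K)
    -- Q ∈ L¹(t,T;𝕊ⁿ)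
    (hQmeas : AEStronglyMeasurable Q (volume.restrict (Set.Icc t T)))
    (hQ : IntegrableOn (fun s => ‖Q s‖) (Set.Icc t T))
    -- S ∈ L²(t,T;ℝ^{m×n})
    (hSmeas : AEStronglyMeasurable S (volume.restrict (Set.Icc t T)))
    (hS : IntegrableOn (fun s => ‖S s‖ ^ 2) (Set.Icc t T))
    -- R ∈ L^∞(t,T;𝕊ᵐ)
    (hRsymm : ∀ᵐ s ∂volume.restrict (Set.Icc t T), (R s)ᵀ = R s)
    (P Pbar : ℝ → Matrix (Fin n) (Fin n) ℝ)
    (hP : IsRegularGameRiccatiSolution t T A B C D Q S R G P)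
    (hPbar : IsRegularGameRiccatiSolution t T A B C D Q S R G Pbar) :
    ∀ s ∈ Set.Icc t T, P s = Pbar s := by
  obtain ⟨Θ, hΘ, hRange, hEq⟩ := hP.exists_gain
  obtain ⟨Θ', hΘ', hRange', hEq'⟩ := hPbar.exists_gain
  set μ := volume.restrict (Icc t T)
  have hA₁ : MemLp A 1 μ := memLp_one_iff_integrable.2 ((integrable_norm_iff hAmeas).1 hA)
  have hQ₁ : MemLp Q 1 μ := memLp_one_iff_integrable.2 ((integrable_norm_iff hQmeas).1 hQ)
  have hB₂ : MemLp B 2 μ := (memLp_two_iff_integrable_sq_norm hBmeas).2 hB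
  have hC₂ : MemLp C 2 μ := (memLp_two_iff_integrable_sq_norm hCmeas).2 hC
  have hS₂ : MemLp S 2 μ := (memLp_two_iff_integrable_sq_norm hSmeas).2 hS
  obtain ⟨K, hK⟩ := hD
  have hD_top : MemLp D ∞ μ := memLp_top_of_bound hDmeas K hK
  have hF := hA₁.integrable_riccatiIntegrand hB₂ hC₂ hD_top hQ₁ hS₂
    (hP.1.memLp_top_restrict isCompact_Icc) hΘ
  have hF' := hA₁.integrable_riccatiIntegrand hB₂ hC₂ hD_top hQ₁ hS₂
    (hPbar.1.memLp_top_restrict isCompact_Icc) hΘ'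
  suffices EqOn (P - Pbar) 0 (Icc t T) from fun s hs => sub_eq_zero.1 (this hs)
  refine eqOn_zero_of_eq_intervalIntegral_lyapunov (hP.1.sub hPbar.1)
    (hA₁.sub (hB₂.matrix_mul hΘ' : MemLp _ 1 μ)) (hA₁.sub (hB₂.matrix_mul hΘ : MemLp _ 1 μ))
    (hC₂.sub (hD_top.matrix_mul hΘ : MemLp _ 2 μ)) (hC₂.sub (hD_top.matrix_mul hΘ' : MemLp _ 2 μ))
    (L := fun r => riccatiIntegrand A B C D Q S P Θ r - riccatiIntegrand A B C D Q S Pbar Θ' r)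
    ?_ fun s hs => ?_
  · filter_upwards [hRange, hRange', hRsymm, ae_restrict_mem measurableSet_Icc]
      with r h h' hR hr
    exact Matrix.riccati_sub_eq_lyapunov _ _ _ _ _ _ _ _ _ _ _
      (hP.2.1 r hr) (hPbar.2.1 r hr) hR h h'
  · have hsub : uIcc s T ⊆ Icc t T := uIcc_of_le hs.2 ▸ Icc_subset_Icc_left hs.1
    rw [Pi.sub_apply, hEq s hs, hEq' s hs, intervalIntegral.integral_sub
      (IntegrableOn.mono_set hF hsub).intervalIntegrable
      (IntegrableOn.mono_set hF' hsub).intervalIntegrable]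
    abel

/-- Corollary 5.3: the game Riccati equation admits at most one regular solution. -/
theorem regular_game_riccati_solution_unique
    {n m₁ m₂ : ℕ} (hn : 1 ≤ n) (hm₁ : 1 ≤ m₁) (hm₂ : 1 ≤ m₂)
    (t T : ℝ) (ht : 0 ≤ t) (htT : t < T)
    (A : ℝ → Matrix (Fin n) (Fin n) ℝ)
    (B : ℝ → Matrix (Fin n) (Fin m₁ ⊕ Fin m₂) ℝ)
    (C : ℝ → Matrix (Fin n) (Fin n) ℝ)
    (D : ℝ → Matrix (Fin n) (Fin m₁ ⊕ Fin m₂) ℝ)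
    (Q : ℝ → Matrix (Fin n) (Fin n) ℝ)
    (S : ℝ → Matrix (Fin m₁ ⊕ Fin m₂) (Fin n) ℝ)
    (R : ℝ → Matrix (Fin m₁ ⊕ Fin m₂) (Fin m₁ ⊕ Fin m₂) ℝ)
    (G : Matrix (Fin n) (Fin n) ℝ)
    -- A ∈ L¹(t,T;ℝ^{n×n})
    (hAmeas : AEStronglyMeasurable A (volume.restrict (Set.Icc t T)))
    (hA : IntegrableOn (fun s => ‖A s‖) (Set.Icc t T))
    -- B ∈ L²(t,T;ℝ^{n×m})
    (hBmeas : AEStronglyMeasurable B (volume.restrict (Set.Icc t T)))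
    (hB : IntegrableOn (fun s => ‖B s‖ ^ 2) (Set.Icc t T))
    -- C ∈ L²(t,T;ℝ^{n×n})
    (hCmeas : AEStronglyMeasurable C (volume.restrict (Set.Icc t T)))
    (hC : IntegrableOn (fun s => ‖C s‖ ^ 2) (Set.Icc t T))
    -- D ∈ L^∞(t,T;ℝ^{n×m})
    (hDmeas : AEStronglyMeasurable D (volume.restrict (Set.Icc t T)))
    (hD : ∃ K : ℝ, ∀ᵐ s ∂volume.restrict (Set.Icc t T), ‖D s‖ ≤ K)
    -- Q ∈ L¹(t,T;𝕊ⁿ)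
    (hQmeas : AEStronglyMeasurable Q (volume.restrict (Set.Icc t T)))
    (hQ : IntegrableOn (fun s => ‖Q s‖) (Set.Icc t T))
    (hQsymm : ∀ᵐ s ∂volume.restrict (Set.Icc t T), (Q s)ᵀ = Q s)
    -- S ∈ L²(t,T;ℝ^{m×n})
    (hSmeas : AEStronglyMeasurable S (volume.restrict (Set.Icc t T)))
    (hS : IntegrableOn (fun s => ‖S s‖ ^ 2) (Set.Icc t T))
    -- R ∈ L^∞(t,T;𝕊ᵐ)
    (hRmeas : AEStronglyMeasurable R (volume.restrict (Set.Icc t T)))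
    (hR : ∃ K : ℝ, ∀ᵐ s ∂volume.restrict (Set.Icc t T), ‖R s‖ ≤ K)
    (hRsymm : ∀ᵐ s ∂volume.restrict (Set.Icc t T), (R s)ᵀ = R s)
    -- G ∈ 𝕊ⁿ
    (hG : Gᵀ = G)
    (P Pbar : ℝ → Matrix (Fin n) (Fin n) ℝ)
    (hP : IsRegularGameRiccatiSolution t T A B C D Q S R G P)
    (hPbar : IsRegularGameRiccatiSolution t T A B C D Q S R G Pbar) :
    ∀ s ∈ Set.Icc t T, P s = Pbar s :=
  regular_game_riccati_solution_unique_general t T A B C D Q S R G hAmeas hA hBmeas hB hCmeas hC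
    hDmeas hD hQmeas hQ hSmeas hS hRsymm P Pbar hP hPbar
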